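/- arXiv:1605.05564 — 2 statements merged into one kernel-verified Lean document; each statement's English description precedes it below -/
import Mathlib

section
/- Let n ≥ 2, x ∈ ℝ^n with x ≠ 0, and ε > 0. Let y^⊥ denote the orthogonal projection of y onto the hyperplane orthogonal to x, and let P(y) denote the reflection of y with respect to that hyperplane. Then the average of |x + y| over y in the ball B(0,ε) equals the average of (|x + y| + |x + P(y)|)/2 over B(0,ε), and this is at least the average of |x + y^⊥| over y ∈ B(0,ε). -/
/-! The reflection `P` across `⟨x⟩^⊥` is a linear isometry preserving the ball, hence also
Lebesgue measure on it, so `y ↦ |x + y|` and `y ↦ |x + P y|` have the same average. Since `y^⊥`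
is the midpoint of `y` and `P y`, convexity of the norm gives
`|x + y^⊥| ≤ (|x + y| + |x + P y|) / 2` pointwise, and averaging gives the inequality. -/

open scoped RealInnerProductSpace

open MeasureTheory Metric

namespace Submodule

variable {E : Type*} [NormedAddCommGroup E] [InnerProductSpace ℝ E]

theorem starProjection_orthogonal_singleton_apply (x y : E) :
    (ℝ ∙ x)ᗮ.starProjection y = y - (⟪x, y⟫ / ‖x‖ ^ 2) • x := by
  simp [starProjection_singleton]

theorem reflection_orthogonal_singleton_apply (x y : E) :
    (ℝ ∙ x)ᗮ.reflection y = y - (2 * (⟪x, y⟫ / ‖x‖ ^ 2)) • x := by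
  rw [reflection_apply, starProjection_orthogonal_singleton_apply]
  module

theorem norm_add_starProjection_le (K : Submodule ℝ E) [K.HasOrthogonalProjection] (x y : E) :
    ‖x + K.starProjection y‖ ≤ (‖x + y‖ + ‖x + K.reflection y‖) / 2 := by
  have hmid : x + K.starProjection y = (2⁻¹ : ℝ) • ((x + y) + (x + K.reflection y)) := by
    rw [reflection_apply]
    module
  rw [hmid, norm_smul, Real.norm_of_nonneg (by norm_num), inv_mul_eq_div]
  gcongr
  exact norm_add_le _ _

end Submodule

section Average

variable {α : Type*} [MeasurableSpace α] {μ : Measure α} {s : Set α}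

theorem MeasureTheory.MeasurePreserving.setIntegral_comp_of_preimage_eq {F : Type*} [NormedAddCommGroup F]
    [NormedSpace ℝ F] {e : α → α} (he : MeasurePreserving e μ μ) (he' : MeasurableEmbedding e)
    (hs : e ⁻¹' s = s) (f : α → F) :
    ∫ y in s, f (e y) ∂μ = ∫ y in s, f y ∂μ := by
  simpa only [hs] using he.setIntegral_preimage_emb he' f s

theorem MeasureTheory.MeasurePreserving.setAverage_eq_setAverage_half_add_comp {e : α → α}
    (he : MeasurePreserving e μ μ) (he' : MeasurableEmbedding e) (hs : e ⁻¹' s = s)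
    {f : α → ℝ} (hf : IntegrableOn f s μ) :
    ⨍ y in s, f y ∂μ = ⨍ y in s, (f y + f (e y)) / 2 ∂μ := by
  have hfe : IntegrableOn (fun y ↦ f (e y)) s μ := by
    rw [← hs]
    exact (he.integrableOn_comp_preimage he').2 hf
  rw [setAverage_eq, setAverage_eq, integral_div, integral_add hf hfe,
    he.setIntegral_comp_of_preimage_eq he' hs f, add_self_div_two]

theorem setAverage_mono_on {f g : α → ℝ} (hs : MeasurableSet s) (hf : IntegrableOn f s μ)
    (hg : IntegrableOn g s μ) (h : ∀ y ∈ s, f y ≤ g y) :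
    ⨍ y in s, f y ∂μ ≤ ⨍ y in s, g y ∂μ := by
  simp only [setAverage_eq, smul_eq_mul]
  exact mul_le_mul_of_nonneg_left (setIntegral_mono_on hf hg hs h) (by positivity)

end Average

theorem Continuous.integrableOn_ball {X F : Type*} [MetricSpace X] [ProperSpace X]
    [MeasurableSpace X] [OpensMeasurableSpace X] {μ : Measure X} [IsFiniteMeasureOnCompacts μ]
    [NormedAddCommGroup F] {f : X → F} (hf : Continuous f) (c : X) (r : ℝ) :
    IntegrableOn f (ball c r) μ :=
  (hf.continuousOn.integrableOn_compact (isCompact_closedBall c r)).mono_set ball_subset_closedBall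

theorem average_reflection_general (n : ℕ) (x : EuclideanSpace ℝ (Fin n)) (ε : ℝ) :
    (⨍ y in ball (0 : EuclideanSpace ℝ (Fin n)) ε, ‖x + y‖) =
      (⨍ y in ball (0 : EuclideanSpace ℝ (Fin n)) ε,
        (‖x + y‖ + ‖x + (y - (2 * (⟪x, y⟫ / ‖x‖ ^ 2)) • x)‖) / 2) ∧
    (⨍ y in ball (0 : EuclideanSpace ℝ (Fin n)) ε,
        (‖x + y‖ + ‖x + (y - (2 * (⟪x, y⟫ / ‖x‖ ^ 2)) • x)‖) / 2) ≥
      ⨍ y in ball (0 : EuclideanSpace ℝ (Fin n)) ε,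
        ‖x + (y - (⟪x, y⟫ / ‖x‖ ^ 2) • x)‖ := by
  set K := (ℝ ∙ x)ᗮ
  simp only [← Submodule.reflection_orthogonal_singleton_apply,
    ← Submodule.starProjection_orthogonal_singleton_apply]
  have hball : K.reflection ⁻¹' ball 0 ε = ball 0 ε := by simp
  have hP := K.reflection.measurePreserving
  have hP_emb := K.reflection.toMeasurableEquiv.measurableEmbedding
  refine ⟨hP.setAverage_eq_setAverage_half_add_comp hP_emb hball
    ((by fun_prop : Continuous fun y ↦ ‖x + y‖).integrableOn_ball 0 ε), ?_⟩
  exact setAverage_mono_on measurableSet_ball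
    ((by fun_prop : Continuous fun y ↦ ‖x + K.starProjection y‖).integrableOn_ball 0 ε)
    ((by fun_prop : Continuous fun y ↦ (‖x + y‖ + ‖x + K.reflection y‖) / 2).integrableOn_ball 0 ε)
    fun y _ ↦ K.norm_add_starProjection_le x y

theorem average_reflection (n : ℕ) (hn : 2 ≤ n) (x : EuclideanSpace ℝ (Fin n))
    (hx : x ≠ 0) (ε : ℝ) (hε : 0 < ε) :
    (⨍ y in ball (0 : EuclideanSpace ℝ (Fin n)) ε, ‖x + y‖) =
      (⨍ y in ball (0 : EuclideanSpace ℝ (Fin n)) ε,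
        (‖x + y‖ + ‖x + (y - (2 * (⟪x, y⟫ / ‖x‖ ^ 2)) • x)‖) / 2) ∧
    (⨍ y in ball (0 : EuclideanSpace ℝ (Fin n)) ε,
        (‖x + y‖ + ‖x + (y - (2 * (⟪x, y⟫ / ‖x‖ ^ 2)) • x)‖) / 2) ≥
      ⨍ y in ball (0 : EuclideanSpace ℝ (Fin n)) ε,
        ‖x + (y - (⟪x, y⟫ / ‖x‖ ^ 2) • x)‖ :=
  average_reflection_general n x ε
end

section
/- Let μ be the probability measure on ℝ^n given by μ = β·L_{B(x,ε)} + ((1-β)/2)(δ_{x+εν} + δ_{x-εν}), where L_{B(x,ε)} is the uniform distribution on B(x,ε), ν is a unit vector, β ∈ (0,1], and let f(y) = η(c - |y|) with η > 0, c > 1. Then for every x ∈ B(0,1) and ε ∈ (0,1): ∫ f dμ ≤ f(x) - η·C(n)·β·ε²/(2(|x|+ε)), where C(n) is the constant from the drift estimate. -/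
/-!
For `y ∈ B(x, ε)` and a unit vector `e` with `x = ‖x‖ e`, the norm dominates
`⟪e, y⟫ + (‖y‖² - ⟪e, y⟫²) / (2 (‖x‖ + ε))`. Averaged over the ball, the linear term gives `‖x‖`
by symmetry, while the transverse term `‖y‖² - ⟪e, y⟫²` is invariant under translation along `e`
and, by rotation invariance, averages to `(1 - 1/n)` times the mean of `‖h‖²` over `B(0, ε)`,
which is at least `ε² / 8`. Hence `⨍_{B(x,ε)} ‖y‖ ≥ ‖x‖ + ε² / (32 (‖x‖ + ε))`, so `C = 1/16`
works. The two Dirac masses have midpoint `x`, so by the triangle inequality they contribute at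
most the value of the cone at `x`.
-/

open MeasureTheory Metric Module
open scoped RealInnerProductSpace

lemma inner_add_norm_sq_sub_inner_sq_div_le_norm {E : Type*} [NormedAddCommGroup E]
    [InnerProductSpace ℝ E] {e y : E} (he : ‖e‖ = 1) {M : ℝ} (hM : 0 < M) (hyM : ‖y‖ ≤ M) :
    ⟪e, y⟫ + (‖y‖ ^ 2 - ⟪e, y⟫ ^ 2) / (2 * M) ≤ ‖y‖ := by
  have hu := abs_le.1 ((abs_real_inner_le_norm e y).trans_eq (by rw [he, one_mul]))
  rw [← le_sub_iff_add_le', div_le_iff₀' (by positivity)]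
  nlinarith

lemma norm_sq_sub_inner_sq_smul_add {E : Type*} [NormedAddCommGroup E] [InnerProductSpace ℝ E]
    {e : E} (he : ‖e‖ = 1) (t : ℝ) (h : E) :
    ‖t • e + h‖ ^ 2 - ⟪e, t • e + h⟫ ^ 2 = ‖h‖ ^ 2 - ⟪e, h⟫ ^ 2 := by
  rw [norm_add_sq_real, inner_add_right, inner_smul_right, inner_smul_left, norm_smul,
    real_inner_self_eq_norm_sq, he, Real.norm_eq_abs, RCLike.conj_to_real, mul_one, sq_abs]
  ring

lemma exists_norm_eq_one_and_eq_norm_smul {E : Type*} [NormedAddCommGroup E] [NormedSpace ℝ E]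
    [Nontrivial E] (x : E) : ∃ e : E, ‖e‖ = 1 ∧ x = ‖x‖ • e := by
  rcases eq_or_ne x 0 with rfl | hx
  · obtain ⟨e, he⟩ := exists_norm_eq E zero_le_one
    exact ⟨e, he, by simp⟩
  · exact ⟨‖x‖⁻¹ • x, norm_smul_inv_norm hx, by
      rw [smul_smul, mul_inv_cancel₀ (norm_ne_zero_iff.2 hx), one_smul]⟩

section Ball

variable {E : Type*} [NormedAddCommGroup E] [InnerProductSpace ℝ E] [FiniteDimensional ℝ E]
  [MeasurableSpace E] [BorelSpace E]

lemma integrableOn_ball_of_continuous {f : E → ℝ} (hf : Continuous f) (x : E) (r : ℝ) :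
    IntegrableOn f (ball x r) :=
  (hf.continuousOn.integrableOn_compact (isCompact_closedBall x r)).mono_set ball_subset_closedBall

lemma setIntegral_ball_eq_setIntegral_ball_zero (g : E → ℝ) (x : E) (r : ℝ) :
    ∫ y in ball x r, g y = ∫ h in ball 0 r, g (x + h) := by
  have hpre : (x + ·) ⁻¹' ball x r = ball 0 r := by simp [preimage_add_ball]
  simpa only [hpre] using ((measurePreserving_add_left volume x).setIntegral_preimage_emb
    (Homeomorph.addLeft x).measurableEmbedding g (ball x r)).symm

lemma setIntegral_ball_zero_comp_linearIsometryEquiv (T : E ≃ₗᵢ[ℝ] E) (g : E → ℝ) (r : ℝ) :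
    ∫ h in ball 0 r, g (T h) = ∫ h in ball 0 r, g h := by
  have hpre : T ⁻¹' ball 0 r = ball 0 r := by ext h; simp
  simpa only [hpre] using T.measurePreserving.setIntegral_preimage_emb
    T.toHomeomorph.measurableEmbedding g (ball 0 r)

lemma setIntegral_inner_ball_zero (v : E) (r : ℝ) : ∫ h in ball 0 r, ⟪v, h⟫ = 0 := by
  have hneg := setIntegral_ball_zero_comp_linearIsometryEquiv (LinearIsometryEquiv.neg ℝ)
    (fun h : E ↦ ⟪v, h⟫) r
  simp only [LinearIsometryEquiv.coe_neg, inner_neg_right, integral_neg] at hneg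
  linarith

lemma setIntegral_inner_ball (v x : E) (r : ℝ) :
    ∫ y in ball x r, ⟪v, y⟫ = ⟪v, x⟫ * volume.real (ball x r) := by
  have hint : IntegrableOn (fun h : E ↦ ⟪v, h⟫) (ball 0 r) :=
    integrableOn_ball_of_continuous (by fun_prop) 0 r
  simp only [setIntegral_ball_eq_setIntegral_ball_zero _ x, inner_add_right]
  rw [integral_add (integrableOn_const (C := ⟪v, x⟫) measure_ball_lt_top.ne) hint,
    setIntegral_inner_ball_zero, setIntegral_const, Measure.addHaar_real_ball_center volume x,
    smul_eq_mul, add_zero, mul_comm]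

lemma setIntegral_inner_sq_ball_zero_eq_of_norm_eq {e e' : E} (hee' : ‖e‖ = ‖e'‖) (r : ℝ) :
    ∫ h in ball 0 r, ⟪e, h⟫ ^ 2 = ∫ h in ball 0 r, ⟪e', h⟫ ^ 2 := by
  set R := (ℝ ∙ (e - e'))ᗮ.reflection
  have hR : ∀ y, ⟪e, R y⟫ = ⟪e', y⟫ := fun y ↦ by
    rw [← Submodule.reflection_sub hee', ← R.inner_map_map, Submodule.reflection_reflection]
  simpa only [hR] using (setIntegral_ball_zero_comp_linearIsometryEquiv R (⟪e, ·⟫ ^ 2) r).symm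

lemma finrank_mul_setIntegral_inner_sq_ball_zero {e : E} (he : ‖e‖ = 1) (r : ℝ) :
    (finrank ℝ E : ℝ) * ∫ h in ball 0 r, ⟪e, h⟫ ^ 2 = ∫ h in ball (0 : E) r, ‖h‖ ^ 2 := by
  let b := stdOrthonormalBasis ℝ E
  have hb : ∀ i, ∫ h in ball 0 r, ⟪b i, h⟫ ^ 2 = ∫ h in ball 0 r, ⟪e, h⟫ ^ 2 := fun i ↦
    setIntegral_inner_sq_ball_zero_eq_of_norm_eq (by rw [b.orthonormal.1 i, he]) r
  calc (finrank ℝ E : ℝ) * ∫ h in ball 0 r, ⟪e, h⟫ ^ 2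
      = ∑ i, ∫ h in ball 0 r, ⟪b i, h⟫ ^ 2 := by simp [hb]
    _ = ∫ h in ball (0 : E) r, ‖h‖ ^ 2 := by
      simp only [← integral_finsetSum _ fun i _ ↦
        integrableOn_ball_of_continuous (by fun_prop : Continuous (⟪b i, ·⟫ ^ 2)) 0 r,
        b.sum_sq_inner_right]

lemma measureReal_ball_half_le [Nontrivial E] (r : ℝ) :
    volume.real (ball (0 : E) (r / 2)) ≤ volume.real (ball (0 : E) r) / 2 := by
  rcases lt_or_ge r 0 with hr | hr
  · simp [ball_eq_empty.2 hr.le, ball_eq_empty.2 (by linarith : r / 2 ≤ 0)]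
  have hpow : (2⁻¹ : ℝ) ^ finrank ℝ E ≤ 2⁻¹ :=
    pow_le_of_le_one (by norm_num) (by norm_num) finrank_pos.ne'
  rw [measureReal_def, measureReal_def, div_eq_inv_mul,
    Measure.addHaar_ball_mul volume 0 (by norm_num) r, ENNReal.toReal_mul,
    ENNReal.toReal_ofReal (by positivity), div_eq_mul_inv, mul_comm _ 2⁻¹]
  gcongr

lemma mul_measureReal_ball_le_setIntegral_norm_sq [Nontrivial E] {r : ℝ} (hr : 0 ≤ r) :
    r ^ 2 / 8 * volume.real (ball (0 : E) r) ≤ ∫ h in ball (0 : E) r, ‖h‖ ^ 2 := by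
  have hsub : ball (0 : E) (r / 2) ⊆ ball 0 r := ball_subset_ball (by linarith)
  calc r ^ 2 / 8 * volume.real (ball (0 : E) r)
      ≤ (r / 2) ^ 2 * (volume.real (ball (0 : E) r) - volume.real (ball (0 : E) (r / 2))) := by
        nlinarith [measureReal_ball_half_le (E := E) r, sq_nonneg r]
    _ = (r / 2) ^ 2 * volume.real (ball (0 : E) r \ ball 0 (r / 2)) := by
        rw [measureReal_sdiff hsub measurableSet_ball]
    _ ≤ ∫ h in ball (0 : E) r \ ball 0 (r / 2), ‖h‖ ^ 2 := by
        refine setIntegral_ge_of_const_le_real (measurableSet_ball.diff measurableSet_ball)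
          (measure_ne_top_of_subset Set.sdiff_subset measure_ball_lt_top.ne) (fun h hh ↦ ?_)
          ((integrableOn_ball_of_continuous (by fun_prop) 0 r).mono_set Set.sdiff_subset)
        have hh' : r / 2 ≤ ‖h‖ := by simpa using hh.2
        gcongr
    _ ≤ ∫ h in ball (0 : E) r, ‖h‖ ^ 2 :=
        setIntegral_mono_set (integrableOn_ball_of_continuous (by fun_prop) 0 r)
          (ae_of_all _ fun _ ↦ by positivity) Set.sdiff_subset.eventuallyLE

lemma mul_measureReal_ball_le_setIntegral_norm_sq_sub_inner_sq (hE : 2 ≤ finrank ℝ E) {e : E}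
    (he : ‖e‖ = 1) {r : ℝ} (hr : 0 ≤ r) :
    r ^ 2 / 16 * volume.real (ball (0 : E) r) ≤ ∫ h in ball (0 : E) r, (‖h‖ ^ 2 - ⟪e, h⟫ ^ 2) := by
  have : Nontrivial E := Module.nontrivial_of_finrank_pos (R := ℝ) (by omega)
  set S := ∫ h in ball (0 : E) r, ‖h‖ ^ 2
  set K := ∫ h in ball (0 : E) r, ⟪e, h⟫ ^ 2
  have hS : r ^ 2 / 8 * volume.real (ball (0 : E) r) ≤ S :=
    mul_measureReal_ball_le_setIntegral_norm_sq hr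
  have hK : (finrank ℝ E : ℝ) * K = S := finrank_mul_setIntegral_inner_sq_ball_zero he r
  have hK0 : 0 ≤ K := setIntegral_nonneg measurableSet_ball fun _ _ ↦ sq_nonneg _
  have hE' : (2 : ℝ) ≤ finrank ℝ E := by exact_mod_cast hE
  rw [integral_sub (integrableOn_ball_of_continuous (by fun_prop) 0 r)
    (integrableOn_ball_of_continuous (by fun_prop) 0 r)]
  nlinarith

lemma norm_add_le_setAverage_norm_ball (hE : 2 ≤ finrank ℝ E) (x : E) {ε : ℝ} (hε : 0 < ε) :
    ‖x‖ + ε ^ 2 / (32 * (‖x‖ + ε)) ≤ ⨍ y in ball x ε, ‖y‖ := by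
  have : Nontrivial E := Module.nontrivial_of_finrank_pos (R := ℝ) (by omega)
  obtain ⟨e, he, hxe⟩ := exists_norm_eq_one_and_eq_norm_smul x
  set M := ‖x‖ + ε
  have hM : 0 < M := by positivity
  set V := volume.real (ball x ε)
  have hV : 0 < V := ENNReal.toReal_pos (measure_ball_pos volume x hε).ne' measure_ball_lt_top.ne
  have hex : ⟪e, x⟫ = ‖x‖ := by
    rw [hxe, inner_smul_right, real_inner_self_eq_norm_sq, he, norm_smul, he]; simp
  have hcont : Continuous fun y : E ↦ ⟪e, y⟫ := by fun_prop
  have hcont' : Continuous fun y : E ↦ ‖y‖ ^ 2 - ⟪e, y⟫ ^ 2 := by fun_prop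
  rw [setAverage_eq, smul_eq_mul, le_inv_mul_iff₀ hV]
  calc V * (‖x‖ + ε ^ 2 / (32 * M))
      = ‖x‖ * V + ε ^ 2 / 16 * volume.real (ball (0 : E) ε) / (2 * M) := by
        rw [← Measure.addHaar_real_ball_center volume x]; field_simp; ring
    _ ≤ ‖x‖ * V + (∫ h in ball (0 : E) ε, (‖h‖ ^ 2 - ⟪e, h⟫ ^ 2)) / (2 * M) := by
        gcongr
        exact mul_measureReal_ball_le_setIntegral_norm_sq_sub_inner_sq hE he hε.le
    _ = (∫ y in ball x ε, ⟪e, y⟫) + (∫ y in ball x ε, (‖y‖ ^ 2 - ⟪e, y⟫ ^ 2)) / (2 * M) := by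
        rw [setIntegral_inner_ball, hex, setIntegral_ball_eq_setIntegral_ball_zero _ x]
        have hshift : ∀ h, ‖x + h‖ ^ 2 - ⟪e, x + h⟫ ^ 2 = ‖h‖ ^ 2 - ⟪e, h⟫ ^ 2 := fun h ↦ by
          rw [hxe]; exact norm_sq_sub_inner_sq_smul_add he _ h
        simp only [hshift, V]
    _ = ∫ y in ball x ε, (⟪e, y⟫ + (‖y‖ ^ 2 - ⟪e, y⟫ ^ 2) / (2 * M)) := by
        rw [integral_add (integrableOn_ball_of_continuous hcont x ε)
          ((integrableOn_ball_of_continuous hcont' x ε).div_const _), integral_div]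
    _ ≤ ∫ y in ball x ε, ‖y‖ := by
        refine setIntegral_mono_on ((integrableOn_ball_of_continuous hcont x ε).add
          ((integrableOn_ball_of_continuous hcont' x ε).div_const _))
          (integrableOn_ball_of_continuous continuous_norm x ε) measurableSet_ball fun y hy ↦ ?_
        refine inner_add_norm_sq_sub_inner_sq_div_le_norm he hM ?_
        linarith [norm_le_norm_add_norm_sub' y x, mem_ball_iff_norm.1 hy]

end Ball

lemma two_mul_norm_le_norm_add_add_norm_sub {E : Type*} [SeminormedAddCommGroup E]
    [NormedSpace ℝ E] (x v : E) : 2 * ‖x‖ ≤ ‖x + v‖ + ‖x - v‖ :=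
  calc 2 * ‖x‖ = ‖(x + v) + (x - v)‖ := by
        rw [add_add_sub_cancel, ← two_smul ℝ, norm_smul, Real.norm_two]
    _ ≤ ‖x + v‖ + ‖x - v‖ := norm_add_le _ _

lemma integral_smul_add_smul_dirac_add_dirac {X : Type*} [MeasurableSpace X]
    [MeasurableSingletonClass X] {μ : Measure X} {f : X → ℝ} (hf : Integrable f μ) {a b : ℝ}
    (ha : 0 ≤ a) (hb : 0 ≤ b) (p q : X) :
    ∫ y, f y ∂(ENNReal.ofReal a • μ + ENNReal.ofReal b • (Measure.dirac p + Measure.dirac q)) =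
      a * ∫ y, f y ∂μ + b * (f p + f q) := by
  have hp : Integrable f (Measure.dirac p) := integrable_dirac enorm_lt_top
  have hq : Integrable f (Measure.dirac q) := integrable_dirac enorm_lt_top
  rw [integral_add_measure (hf.smul_measure ENNReal.ofReal_ne_top)
      ((hp.add_measure hq).smul_measure ENNReal.ofReal_ne_top),
    integral_smul_measure, integral_smul_measure, integral_add_measure hp hq, integral_dirac,
    integral_dirac, ENNReal.toReal_ofReal ha, ENNReal.toReal_ofReal hb, smul_eq_mul, smul_eq_mul]

theorem cone_one_step_decrease (n : ℕ) (hn : 2 ≤ n) :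
    ∃ C : ℝ, 0 < C ∧
      ∀ (x ν : EuclideanSpace ℝ (Fin n)) (ε β η c : ℝ), ‖ν‖ = 1 →
        β ∈ Set.Ioc (0 : ℝ) 1 → 0 < η → 1 < c →
        x ∈ ball (0 : EuclideanSpace ℝ (Fin n)) 1 → ε ∈ Set.Ioo (0 : ℝ) 1 →
        (∫ y, η * (c - ‖y‖) ∂(ENNReal.ofReal β •
            ((volume (ball x ε))⁻¹ • volume.restrict (ball x ε)) +
          ENNReal.ofReal ((1 - β) / 2) •
            (Measure.dirac (x + ε • ν) + Measure.dirac (x - ε • ν)))) ≤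
          η * (c - ‖x‖) - η * C * β * ε ^ 2 / (2 * (‖x‖ + ε)) := by
  refine ⟨1 / 16, by norm_num, ?_⟩
  intro x ν ε β η c _ ⟨hβ0, hβ1⟩ hη _ _ ⟨hε0, _⟩
  set P := (volume (ball x ε))⁻¹ • volume.restrict (ball x ε)
  have : IsProbabilityMeasure P := ProbabilityTheory.cond_isProbabilityMeasure_of_finite
    (measure_ball_pos volume x hε0).ne' measure_ball_lt_top.ne
  have hnorm : Integrable (‖·‖) P :=
    (integrableOn_ball_of_continuous continuous_norm x ε).smul_measure
      (ENNReal.inv_ne_top.2 (measure_ball_pos volume x hε0).ne')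
  have hball : ∫ y, η * (c - ‖y‖) ∂P = η * (c - ⨍ y in ball x ε, ‖y‖) := by
    rw [integral_const_mul, integral_sub (integrable_const c) hnorm, integral_const, probReal_univ,
      one_smul, setAverage_eq']
  have hdrift := norm_add_le_setAverage_norm_ball (by simpa using hn) x hε0
  have hmid := two_mul_norm_le_norm_add_add_norm_sub x (ε • ν)
  have hf : Integrable (fun y ↦ η * (c - ‖y‖)) P := ((integrable_const c).sub hnorm).const_mul η
  rw [integral_smul_add_smul_dirac_add_dirac hf hβ0.le (by linarith), hball]
  have hconst :
      η * (1 / 16) * β * ε ^ 2 / (2 * (‖x‖ + ε)) = β * η * (ε ^ 2 / (32 * (‖x‖ + ε))) := by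
    field_simp
    ring
  nlinarith [mul_le_mul_of_nonneg_left hdrift (mul_nonneg hβ0.le hη.le),
    mul_le_mul_of_nonneg_left hmid (mul_nonneg (by linarith : 0 ≤ 1 - β) hη.le)]
end
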